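/- arXiv:2504.16812 — 3 statements merged into one kernel-verified Lean document; each statement's English description precedes it below -/
import Mathlib

section
/- Let N ≥ 3 be an integer and let ŝ_N ∈ (2,∞) satisfy (1 - ŝ_N^(-2))^(-1/2) = 2^N (ŝ_N^(2-N) - ŝ_N^(1-N)). Define ψ: (1,∞) → ℝ by ψ(s) = (1 - s^(-2))^(1/2) for s ∈ (1, ŝ_N] and ψ(s) = (1 - ŝ_N^(-2))^(1/2) + (2^N/N)(ŝ_N^(-N) - s^(-N)) - (2^N/(N+1))(ŝ_N^(-N-1) - s^(-N-1)) for s ∈ [ŝ_N, ∞). Then ψ is continuously differentiable, strictly monotone increasing, and takes values in the open interval (0, 1 + 1/N). -/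
open Real Set Filter

private lemma aux_deriv_sqrt {s : ℝ} (hs : 1 < s) :
    HasDerivAt (fun t : ℝ => (1 - t ^ (-2 : ℝ)) ^ ((1 : ℝ) / 2))
      ((1 - s ^ (-2 : ℝ)) ^ (-(1 : ℝ) / 2) * s ^ (-3 : ℝ)) s := by
  have hs0 : (0 : ℝ) < s := lt_trans zero_lt_one hs
  have hbase : 0 < 1 - s ^ (-2 : ℝ) := by
    have : s ^ (-2 : ℝ) < 1 := Real.rpow_lt_one_of_one_lt_of_neg hs (by norm_num)
    linarith
  have h1 : HasDerivAt (fun t : ℝ => 1 - t ^ (-2 : ℝ)) (2 * s ^ (-3 : ℝ)) s := by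
    have := (Real.hasDerivAt_rpow_const (x := s) (p := -2) (Or.inl hs0.ne')).const_sub 1
    refine this.congr_deriv ?_
    norm_num
  have h2 := h1.rpow_const (p := (1 : ℝ) / 2) (Or.inl hbase.ne')
  convert h2 using 1
  rw [show ((1 : ℝ) / 2 - 1) = -(1 : ℝ) / 2 by norm_num]
  ring

private lemma aux_deriv_tail {N : ℕ} (hN : 3 ≤ N) (sN : ℝ) {s : ℝ} (hs : 0 < s) :
    HasDerivAt (fun t : ℝ =>
      (1 - sN ^ (-2 : ℝ)) ^ ((1 : ℝ) / 2)
        + 2 ^ N / N * (sN ^ (-(N : ℝ)) - t ^ (-(N : ℝ)))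
        - 2 ^ N / (N + 1) * (sN ^ (-(N : ℝ) - 1) - t ^ (-(N : ℝ) - 1)))
      (2 ^ N * (s ^ (-(N : ℝ) - 1) - s ^ (-(N : ℝ) - 2))) s := by
  have hN0 : (0 : ℝ) < (N : ℝ) := by
    have : 0 < N := by omega
    exact_mod_cast this
  have d1 : HasDerivAt (fun t : ℝ => t ^ (-(N : ℝ))) (-(N : ℝ) * s ^ (-(N : ℝ) - 1)) s :=
    Real.hasDerivAt_rpow_const (Or.inl hs.ne')
  have d2 : HasDerivAt (fun t : ℝ => t ^ (-(N : ℝ) - 1))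
      ((-(N : ℝ) - 1) * s ^ (-(N : ℝ) - 1 - 1)) s :=
    Real.hasDerivAt_rpow_const (Or.inl hs.ne')
  have h := (((d1.const_sub (sN ^ (-(N : ℝ)))).const_mul (2 ^ N / (N : ℝ))).const_add
      ((1 - sN ^ (-2 : ℝ)) ^ ((1 : ℝ) / 2))).sub
      ((d2.const_sub (sN ^ (-(N : ℝ) - 1))).const_mul (2 ^ N / ((N : ℝ) + 1)))
  refine h.congr_deriv ?_
  rw [show (-(N : ℝ) - 1 - 1) = -(N : ℝ) - 2 by ring]
  have hN1 : ((N : ℝ) + 1) ≠ 0 := by positivity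
  field_simp
  ring

/-- The function `ψ` from Definition 5.1 of the paper is continuously differentiable,
strictly monotone increasing on `(1,∞)`, and takes values in `(0, 1 + 1/N)`. -/
theorem stmt_1 (N : ℕ) (hN : 3 ≤ N) (sN : ℝ) (hsN : 2 < sN)
    (heq : (1 - sN ^ (-2 : ℝ)) ^ (-(1 : ℝ) / 2) =
      2 ^ N * (sN ^ ((2 : ℝ) - N) - sN ^ ((1 : ℝ) - N)))
    (ψ : ℝ → ℝ)
    (hψ1 : ∀ s ∈ Set.Ioc (1 : ℝ) sN, ψ s = (1 - s ^ (-2 : ℝ)) ^ ((1 : ℝ) / 2))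
    (hψ2 : ∀ s ∈ Set.Ici sN, ψ s =
      (1 - sN ^ (-2 : ℝ)) ^ ((1 : ℝ) / 2)
        + 2 ^ N / N * (sN ^ (-(N : ℝ)) - s ^ (-(N : ℝ)))
        - 2 ^ N / (N + 1) * (sN ^ (-(N : ℝ) - 1) - s ^ (-(N : ℝ) - 1))) :
    ContDiffOn ℝ 1 ψ (Set.Ioi 1) ∧ StrictMonoOn ψ (Set.Ioi 1) ∧
      ∀ s ∈ Set.Ioi (1 : ℝ), ψ s ∈ Set.Ioo 0 (1 + 1 / (N : ℝ)) := by
  have hsN1 : (1 : ℝ) < sN := lt_trans one_lt_two hsN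
  have hsN0 : (0 : ℝ) < sN := lt_trans zero_lt_one hsN1
  set L : ℝ → ℝ := fun s => (1 - s ^ (-2 : ℝ)) ^ (-(1 : ℝ) / 2) * s ^ (-3 : ℝ) with hL_def
  set R : ℝ → ℝ := fun s => 2 ^ N * (s ^ (-(N : ℝ) - 1) - s ^ (-(N : ℝ) - 2)) with hR_def
  set g : ℝ → ℝ := fun s => if s ≤ sN then L s else R s with hg_def
  -- junction equality
  have e1 : sN ^ ((2 : ℝ) - N) * sN ^ (-3 : ℝ) = sN ^ (-(N : ℝ) - 1) := by
    rw [← Real.rpow_add hsN0]; ring_nf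
  have e2 : sN ^ ((1 : ℝ) - N) * sN ^ (-3 : ℝ) = sN ^ (-(N : ℝ) - 2) := by
    rw [← Real.rpow_add hsN0]; ring_nf
  have hjunc : L sN = R sN := by
    show (1 - sN ^ (-2 : ℝ)) ^ (-(1 : ℝ) / 2) * sN ^ (-3 : ℝ) = _
    rw [heq, mul_assoc, sub_mul, e1, e2]
  -- g is the derivative of ψ everywhere on (1, ∞)
  have hderiv : ∀ s ∈ Set.Ioi (1 : ℝ), HasDerivAt ψ (g s) s := by
    intro s hs
    rw [Set.mem_Ioi] at hs
    have hs0 : (0 : ℝ) < s := lt_trans zero_lt_one hs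
    rcases lt_trichotomy s sN with hlt | heq' | hgt
    · have hg : g s = L s := if_pos hlt.le
      rw [hg]
      refine (aux_deriv_sqrt hs).congr_of_eventuallyEq ?_
      filter_upwards [Ioo_mem_nhds hs hlt] with x hx
      exact hψ1 x ⟨hx.1, hx.2.le⟩
    · subst heq'
      have hg : g s = L s := if_pos le_rfl
      have hLder : HasDerivWithinAt ψ (g s) (Set.Iic s) s := by
        rw [hg]
        refine ((aux_deriv_sqrt hs).hasDerivWithinAt).congr_of_eventuallyEq ?_
          (hψ1 s ⟨hs, le_rfl⟩)
        filter_upwards [Ioc_mem_nhdsLE_of_mem (⟨hs, le_rfl⟩ : s ∈ Set.Ioc 1 s)] with x hx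
        exact hψ1 x hx
      have hRder : HasDerivWithinAt ψ (g s) (Set.Ici s) s := by
        rw [hg, hjunc]
        exact ((aux_deriv_tail hN s hs0).hasDerivWithinAt).congr
          (fun x hx => hψ2 x hx) (hψ2 s Set.self_mem_Ici)
      have := hLder.union hRder
      rw [Set.Iic_union_Ici] at this
      exact hasDerivWithinAt_univ.mp this
    · have hg : g s = R s := if_neg (not_le.mpr hgt)
      rw [hg]
      refine (aux_deriv_tail hN sN hs0).congr_of_eventuallyEq ?_
      filter_upwards [Ioi_mem_nhds hgt] with x hx
      exact hψ2 x (Set.Ioi_subset_Ici_self hx)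
  -- continuity of candidates
  have hcontL : ∀ s : ℝ, 1 < s → ContinuousAt L s := by
    intro s hs
    have hs0 : (0 : ℝ) < s := lt_trans zero_lt_one hs
    have hbase : 0 < 1 - s ^ (-2 : ℝ) := by
      have : s ^ (-2 : ℝ) < 1 := Real.rpow_lt_one_of_one_lt_of_neg hs (by norm_num)
      linarith
    have h1 : ContinuousAt (fun t : ℝ => 1 - t ^ (-2 : ℝ)) s :=
      continuousAt_const.sub (Real.continuousAt_rpow_const s _ (Or.inl hs0.ne'))
    exact (h1.rpow_const (Or.inl hbase.ne')).mul
      (Real.continuousAt_rpow_const s _ (Or.inl hs0.ne'))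
  have hcontR : ∀ s : ℝ, 1 < s → ContinuousAt R s := by
    intro s hs
    have hs0 : (0 : ℝ) < s := lt_trans zero_lt_one hs
    exact continuousAt_const.mul ((Real.continuousAt_rpow_const s _ (Or.inl hs0.ne')).sub
      (Real.continuousAt_rpow_const s _ (Or.inl hs0.ne')))
  -- continuity of g
  have hcontg : ContinuousOn g (Set.Ioi 1) := by
    intro s hs
    rw [Set.mem_Ioi] at hs
    rcases lt_trichotomy s sN with hlt | heq' | hgt
    · refine ((hcontL s hs).congr ?_).continuousWithinAt
      filter_upwards [Iio_mem_nhds hlt] with x hx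
      exact (if_pos hx.le).symm
    · subst heq'
      have c1 : ContinuousWithinAt g (Set.Iic s) s :=
        ((hcontL s hs).continuousWithinAt).congr (fun x hx => if_pos hx) (if_pos le_rfl)
      have c2 : ContinuousWithinAt g (Set.Ici s) s := by
        refine ((hcontR s hs).continuousWithinAt).congr ?_ ?_
        · intro x hx
          rcases eq_or_lt_of_le (Set.mem_Ici.mp hx) with h | h
          · exact h ▸ ((if_pos le_rfl).trans hjunc)
          · exact if_neg (not_le.mpr h)
        · exact (if_pos le_rfl).trans hjunc
      have := c1.union c2
      rw [Set.Iic_union_Ici] at this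
      exact (continuousWithinAt_univ g s |>.mp this).continuousWithinAt
    · refine ((hcontR s hs).congr ?_).continuousWithinAt
      filter_upwards [Ioi_mem_nhds hgt] with x hx
      exact (if_neg (not_le.mpr hx)).symm
  have hdiff : DifferentiableOn ℝ ψ (Set.Ioi 1) :=
    fun s hs => (hderiv s hs).differentiableAt.differentiableWithinAt
  have hderiveq : ∀ s ∈ Set.Ioi (1 : ℝ), deriv ψ s = g s := fun s hs => (hderiv s hs).deriv
  -- C¹
  have hcd : ContDiffOn ℝ 1 ψ (Set.Ioi 1) := by
    have h := (contDiffOn_succ_iff_deriv_of_isOpen (𝕜 := ℝ) (f := ψ) (n := 0)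
      (isOpen_Ioi (a := (1 : ℝ)))).mpr ⟨hdiff, by simp, by
        rw [contDiffOn_zero]; exact hcontg.congr hderiveq⟩
    simpa using h
  -- strict monotonicity
  have hgpos : ∀ s ∈ Set.Ioi (1 : ℝ), 0 < g s := by
    intro s hs
    rw [Set.mem_Ioi] at hs
    have hs0 : (0 : ℝ) < s := lt_trans zero_lt_one hs
    by_cases h : s ≤ sN
    · have hg : g s = (1 - s ^ (-2 : ℝ)) ^ (-(1 : ℝ) / 2) * s ^ (-3 : ℝ) := if_pos h
      rw [hg]
      have hbase : 0 < 1 - s ^ (-2 : ℝ) := by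
        have : s ^ (-2 : ℝ) < 1 := Real.rpow_lt_one_of_one_lt_of_neg hs (by norm_num)
        linarith
      exact mul_pos (Real.rpow_pos_of_pos hbase _) (Real.rpow_pos_of_pos hs0 _)
    · have hg : g s = 2 ^ N * (s ^ (-(N : ℝ) - 1) - s ^ (-(N : ℝ) - 2)) := if_neg h
      rw [hg]
      have : s ^ (-(N : ℝ) - 2) < s ^ (-(N : ℝ) - 1) :=
        Real.rpow_lt_rpow_of_exponent_lt hs (by linarith)
      have h2 : (0 : ℝ) < 2 ^ N := by positivity
      nlinarith
  have hmono : StrictMonoOn ψ (Set.Ioi 1) := by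
    refine strictMonoOn_of_deriv_pos (convex_Ioi 1) hdiff.continuousOn ?_
    rw [interior_Ioi]
    intro x hx
    rw [hderiveq x hx]
    exact hgpos x hx
  refine ⟨hcd, hmono, ?_⟩
  -- bounds
  have hNpos : (0 : ℝ) < (N : ℝ) := by
    have : 0 < N := by omega
    exact_mod_cast this
  have hbnd1 : ∀ s ∈ Set.Ioc (1 : ℝ) sN, 0 < ψ s ∧ ψ s < 1 := by
    intro s hs
    have hbase : 0 < 1 - s ^ (-2 : ℝ) := by
      have : s ^ (-2 : ℝ) < 1 := Real.rpow_lt_one_of_one_lt_of_neg hs.1 (by norm_num)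
      linarith
    have hbase1 : 1 - s ^ (-2 : ℝ) < 1 := by
      have : 0 < s ^ (-2 : ℝ) := Real.rpow_pos_of_pos (by linarith [hs.1]) _
      linarith
    rw [hψ1 s hs]
    exact ⟨Real.rpow_pos_of_pos hbase _, Real.rpow_lt_one hbase.le hbase1 (by norm_num)⟩
  intro s hs
  rw [Set.mem_Ioi] at hs
  have h1N : (0 : ℝ) < 1 / N := by positivity
  rcases le_or_gt s sN with hle | hgt
  · have := hbnd1 s ⟨hs, hle⟩
    exact ⟨this.1, by linarith [this.2]⟩
  · constructor
    · have hψsN : 0 < ψ sN := (hbnd1 sN ⟨hsN1, le_rfl⟩).1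
      have := hmono (Set.mem_Ioi.mpr hsN1) (Set.mem_Ioi.mpr hs) hgt
      linarith
    · rw [hψ2 s hgt.le]
      have hA : (1 - sN ^ (-2 : ℝ)) ^ ((1 : ℝ) / 2) < 1 := by
        have h := (hbnd1 sN ⟨hsN1, le_rfl⟩).2
        rwa [hψ1 sN ⟨hsN1, le_rfl⟩] at h
      have hs0 : (0 : ℝ) < s := by linarith
      have hB : 2 ^ N / N * (sN ^ (-(N : ℝ)) - s ^ (-(N : ℝ))) < 1 / N := by
        have h1 : sN ^ (-(N : ℝ)) < (2 : ℝ) ^ (-(N : ℝ)) :=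
          Real.rpow_lt_rpow_of_neg zero_lt_two hsN (by linarith)
        have h2 : 0 < s ^ (-(N : ℝ)) := Real.rpow_pos_of_pos hs0 _
        have h3 : sN ^ (-(N : ℝ)) - s ^ (-(N : ℝ)) < (2 : ℝ) ^ (-(N : ℝ)) := by linarith
        have h4 : (0 : ℝ) < 2 ^ N / N := by positivity
        have h5 : (2 : ℝ) ^ N * (2 : ℝ) ^ (-(N : ℝ)) = 1 := by
          rw [← Real.rpow_natCast 2 N, ← Real.rpow_add zero_lt_two]
          simp
        calc 2 ^ N / N * (sN ^ (-(N : ℝ)) - s ^ (-(N : ℝ)))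
            < 2 ^ N / N * (2 : ℝ) ^ (-(N : ℝ)) := by
              exact mul_lt_mul_of_pos_left h3 h4
          _ = 1 / N := by rw [div_mul_eq_mul_div, h5]
      have hC : 0 ≤ 2 ^ N / ((N : ℝ) + 1) * (sN ^ (-(N : ℝ) - 1) - s ^ (-(N : ℝ) - 1)) := by
        have h1 : s ^ (-(N : ℝ) - 1) ≤ sN ^ (-(N : ℝ) - 1) :=
          Real.rpow_le_rpow_of_nonpos hsN0 hgt.le (by linarith)
        have h2 : (0 : ℝ) ≤ 2 ^ N / ((N : ℝ) + 1) := by positivity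
        exact mul_nonneg h2 (by linarith)
      linarith
end

section
/- Let N ≥ 3 be an integer and a ≥ -1 a real number with a ≠ -(1+cosh N)/sinh N. Define κ(s) = sinh(Ns)/(1+cosh(Ns)) + N·a/(1+cosh(Ns) + a·sinh(Ns)) for s > 0 with 1+cosh(Ns)+a·sinh(Ns) ≠ 0. Then κ satisfies the Riccati-type ODE κ'(s) = -κ(s)² - (N-2)·sinh(Ns)/(1+cosh(Ns))·κ(s) - (N-2)/(1+cosh(Ns)) + (N-1). -/
set_option maxHeartbeats 1000000 in
/-- The explicit function `κ(s) = sinh(Ns)/(1+cosh(Ns)) + N·a/(1+cosh(Ns)+a·sinh(Ns))`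
solves the Riccati-type ODE
`κ' = -κ² - (N-2)·sinh(Ns)/(1+cosh(Ns))·κ - (N-2)/(1+cosh(Ns)) + (N-1)`
at every `s > 0` where the denominator is nonzero. -/
theorem stmt_5 (N : ℕ) (hN : 3 ≤ N) (a : ℝ) (ha : -1 ≤ a)
    (ha' : a ≠ -(1 + Real.cosh (N : ℝ)) / Real.sinh (N : ℝ))
    (κ : ℝ → ℝ)
    (hκ : ∀ s : ℝ, κ s = Real.sinh ((N : ℝ) * s) / (1 + Real.cosh ((N : ℝ) * s))
        + (N : ℝ) * a / (1 + Real.cosh ((N : ℝ) * s) + a * Real.sinh ((N : ℝ) * s))) :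
    ∀ s : ℝ, 0 < s → 1 + Real.cosh ((N : ℝ) * s) + a * Real.sinh ((N : ℝ) * s) ≠ 0 →
      HasDerivAt κ
        (-(κ s) ^ 2 - ((N : ℝ) - 2) * Real.sinh ((N : ℝ) * s) / (1 + Real.cosh ((N : ℝ) * s)) * κ s
          - ((N : ℝ) - 2) / (1 + Real.cosh ((N : ℝ) * s)) + ((N : ℝ) - 1)) s := by
  intro s hs hd
  set c := Real.cosh ((N : ℝ) * s) with hc
  set h := Real.sinh ((N : ℝ) * s) with hh
  have hu : (1 : ℝ) + c ≠ 0 := by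
    have := Real.cosh_pos ((N : ℝ) * s); rw [← hc] at this; linarith
  have hsq : c ^ 2 - h ^ 2 = 1 := by
    rw [hc, hh]; exact Real.cosh_sq_sub_sinh_sq _
  -- derivative of the inner linear map
  have hlin : HasDerivAt (fun t : ℝ => (N : ℝ) * t) (N : ℝ) s := by
    simpa using (hasDerivAt_id s).const_mul (N : ℝ)
  have hsinh : HasDerivAt (fun t : ℝ => Real.sinh ((N : ℝ) * t)) (c * (N : ℝ)) s := hlin.sinh
  have hcosh : HasDerivAt (fun t : ℝ => Real.cosh ((N : ℝ) * t)) (h * (N : ℝ)) s := hlin.cosh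
  have hden1 : HasDerivAt (fun t : ℝ => 1 + Real.cosh ((N : ℝ) * t)) (h * (N : ℝ)) s := by
    exact ((hasDerivAt_const s (1:ℝ)).add hcosh).congr_deriv (by ring)
  have hden2 : HasDerivAt (fun t : ℝ => 1 + Real.cosh ((N : ℝ) * t) + a * Real.sinh ((N : ℝ) * t))
      (h * (N : ℝ) + a * (c * (N : ℝ))) s := hden1.add (hsinh.const_mul a)
  have h1 : HasDerivAt (fun t : ℝ => Real.sinh ((N : ℝ) * t) / (1 + Real.cosh ((N : ℝ) * t)))
      ((c * (N : ℝ) * (1 + c) - h * (h * (N : ℝ))) / (1 + c) ^ 2) s := hsinh.div hden1 hu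
  have h2 : HasDerivAt (fun t : ℝ =>
      (N : ℝ) * a / (1 + Real.cosh ((N : ℝ) * t) + a * Real.sinh ((N : ℝ) * t)))
      ((0 * (1 + c + a * h) - (N : ℝ) * a * (h * (N : ℝ) + a * (c * (N : ℝ)))) /
        (1 + c + a * h) ^ 2) s := (hasDerivAt_const s ((N : ℝ) * a)).div hden2 hd
  have H := h1.add h2
  have hfun : κ = fun t : ℝ => Real.sinh ((N : ℝ) * t) / (1 + Real.cosh ((N : ℝ) * t))
      + (N : ℝ) * a / (1 + Real.cosh ((N : ℝ) * t) + a * Real.sinh ((N : ℝ) * t)) :=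
    funext hκ
  rw [hκ s, hfun]
  refine H.congr_deriv (Eq.symm ?_)
  rw [← hc, ← hh]
  have hd' : 1 + c + h * a ≠ 0 := by rwa [mul_comm h a]
  field_simp
  linear_combination (-(1 + c + a * h) ^ 2 + (N:ℝ) ^ 2 * a ^ 2 * (1 + c)) * hsq
end

section
/- Let N ≥ 3 be an integer. Define κ(s) = sinh(Ns)/(1+cosh(Ns)) + N/sinh(Ns) for s > 0. Then κ satisfies κ'(s) = -κ(s)² - (N-2)·sinh(Ns)/(1+cosh(Ns))·κ(s) - (N-2)/(1+cosh(Ns)) + (N-1) for all s > 0, and moreover κ(s) - 1/s remains bounded as s → 0+. -/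
lemma aux_sinh_le (x : ℝ) (hx : 0 ≤ x) : Real.sinh x ≤ x * Real.cosh x := by
  have h : MonotoneOn (fun y : ℝ => y * Real.cosh y - Real.sinh y) (Set.Ici 0) := by
    apply monotoneOn_of_deriv_nonneg (convex_Ici 0)
    · fun_prop
    · intro y hy
      exact (((hasDerivAt_id y).mul (Real.hasDerivAt_cosh y)).sub
        (Real.hasDerivAt_sinh y)).differentiableAt.differentiableWithinAt
    · intro y hy
      rw [interior_Ici] at hy
      have hd : HasDerivAt (fun y : ℝ => y * Real.cosh y - Real.sinh y)
          (1 * Real.cosh y + y * Real.sinh y - Real.cosh y) y :=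
        ((hasDerivAt_id y).mul (Real.hasDerivAt_cosh y)).sub (Real.hasDerivAt_sinh y)
      rw [hd.deriv]
      have h1 := Real.sinh_pos_iff.2 (Set.mem_Ioi.1 hy)
      have h2 := Set.mem_Ioi.1 hy
      nlinarith
  have := h (Set.self_mem_Ici) (Set.mem_Ici.2 hx) hx
  simp at this
  linarith

lemma aux_cosh_le (x : ℝ) (hx : 0 ≤ x) : Real.cosh x ≤ 1 + x * Real.sinh x := by
  have h : MonotoneOn (fun y : ℝ => 1 + y * Real.sinh y - Real.cosh y) (Set.Ici 0) := by
    apply monotoneOn_of_deriv_nonneg (convex_Ici 0)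
    · fun_prop
    · intro y hy
      exact (((hasDerivAt_const y 1).add ((hasDerivAt_id y).mul
        (Real.hasDerivAt_sinh y))).sub (Real.hasDerivAt_cosh y)).differentiableAt.differentiableWithinAt
    · intro y hy
      rw [interior_Ici] at hy
      have hd : HasDerivAt (fun y : ℝ => 1 + y * Real.sinh y - Real.cosh y)
          (0 + (1 * Real.sinh y + y * Real.cosh y) - Real.sinh y) y :=
        ((hasDerivAt_const y 1).add ((hasDerivAt_id y).mul (Real.hasDerivAt_sinh y))).sub
          (Real.hasDerivAt_cosh y)
      rw [hd.deriv]
      have h1 := Real.cosh_pos (x := y)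
      have h2 := Set.mem_Ioi.1 hy
      nlinarith
  have := h (Set.self_mem_Ici) (Set.mem_Ici.2 hx) hx
  simp at this
  linarith

lemma aux_alg (n sh ch : ℝ) (hsh : sh ≠ 0) (hch : 1 + ch ≠ 0) (hsq : sh^2 = ch^2 - 1) :
    (ch * (n*1) * (1+ch) - sh*(sh*(n*1)))/(1+ch)^2 + (0*sh - n*(ch*(n*1)))/sh^2
    = -(sh/(1+ch) + n/sh)^2 - (n-2)*sh/(1+ch)*(sh/(1+ch)+n/sh) - (n-2)/(1+ch) + (n-1) := by
  have expand : (ch * (n*1) * (1+ch) - sh*(sh*(n*1)))/(1+ch)^2 + (0*sh - n*(ch*(n*1)))/sh^2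
      - (-(sh/(1+ch) + n/sh)^2 - (n-2)*sh/(1+ch)*(sh/(1+ch)+n/sh) - (n-2)/(1+ch) + (n-1))
      = ((n^2*(1+ch) - sh^2) * (sh^2 - ch^2 + 1)) / ((1+ch)^2 * sh^2) := by
    field_simp
    ring
  have hz : sh^2 - ch^2 + 1 = 0 := by rw [hsq]; ring
  rw [hz, mul_zero, zero_div] at expand
  linarith

/-- The degenerate solution `κ(s) = sinh(Ns)/(1+cosh(Ns)) + N/sinh(Ns)` solves the
Riccati-type ODE for all `s > 0`, and `κ(s) - 1/s` remains bounded as `s → 0+`. -/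
theorem stmt_6 (N : ℕ) (hN : 3 ≤ N)
    (κ : ℝ → ℝ)
    (hκ : ∀ s : ℝ, κ s = Real.sinh ((N : ℝ) * s) / (1 + Real.cosh ((N : ℝ) * s))
        + (N : ℝ) / Real.sinh ((N : ℝ) * s)) :
    (∀ s : ℝ, 0 < s →
      HasDerivAt κ
        (-(κ s) ^ 2 - ((N : ℝ) - 2) * Real.sinh ((N : ℝ) * s) / (1 + Real.cosh ((N : ℝ) * s)) * κ s
          - ((N : ℝ) - 2) / (1 + Real.cosh ((N : ℝ) * s)) + ((N : ℝ) - 1)) s)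
    ∧ ∃ C : ℝ, ∀ s ∈ Set.Ioo (0 : ℝ) 1, |κ s - 1 / s| ≤ C := by
  have hκf : κ = fun s : ℝ => Real.sinh ((N : ℝ) * s) / (1 + Real.cosh ((N : ℝ) * s))
      + (N : ℝ) / Real.sinh ((N : ℝ) * s) := funext hκ
  have hNpos : (0:ℝ) < N := by
    have : (3:ℝ) ≤ N := by exact_mod_cast hN
    linarith
  constructor
  · intro s hs
    have hxpos : 0 < (N:ℝ) * s := mul_pos hNpos hs
    have hsh : 0 < Real.sinh ((N:ℝ) * s) := Real.sinh_pos_iff.2 hxpos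
    have hch : 0 < 1 + Real.cosh ((N:ℝ) * s) := by
      have := Real.one_le_cosh ((N:ℝ)*s); linarith
    have hlin : HasDerivAt (fun s : ℝ => (N:ℝ) * s) ((N:ℝ) * 1) s :=
      (hasDerivAt_id s).const_mul _
    have h1 : HasDerivAt (fun s : ℝ => Real.sinh ((N:ℝ)*s) / (1 + Real.cosh ((N:ℝ)*s)))
        ((Real.cosh ((N:ℝ)*s) * ((N:ℝ)*1) * (1 + Real.cosh ((N:ℝ)*s))
          - Real.sinh ((N:ℝ)*s) * (0 + Real.sinh ((N:ℝ)*s) * ((N:ℝ)*1)))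
          / (1 + Real.cosh ((N:ℝ)*s)) ^ 2) s :=
      hlin.sinh.div ((hasDerivAt_const s (1:ℝ)).add hlin.cosh) hch.ne'
    have h2 : HasDerivAt (fun s : ℝ => (N:ℝ) / Real.sinh ((N:ℝ)*s))
        ((0 * Real.sinh ((N:ℝ)*s) - (N:ℝ) * (Real.cosh ((N:ℝ)*s) * ((N:ℝ)*1)))
          / Real.sinh ((N:ℝ)*s) ^ 2) s :=
      (hasDerivAt_const s ((N:ℝ))).div hlin.sinh hsh.ne'
    rw [hκf]
    have hD := h1.add h2
    refine hD.congr_deriv ?_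
    have hsq : Real.sinh ((N:ℝ)*s) ^ 2 = Real.cosh ((N:ℝ)*s) ^ 2 - 1 := Real.sinh_sq _
    have := aux_alg (N:ℝ) (Real.sinh ((N:ℝ)*s)) (Real.cosh ((N:ℝ)*s)) hsh.ne' hch.ne' hsq
    rw [← this]
    ring
  · refine ⟨(N:ℝ)^2 + 1, fun s hs => ?_⟩
    obtain ⟨hs0, hs1⟩ := hs
    have hxpos : 0 < (N:ℝ) * s := mul_pos hNpos hs0
    have hsh : 0 < Real.sinh ((N:ℝ) * s) := Real.sinh_pos_iff.2 hxpos
    have hch : 0 < 1 + Real.cosh ((N:ℝ) * s) := by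
      have := Real.one_le_cosh ((N:ℝ)*s); linarith
    rw [hκ s, abs_le]
    have hxle : (N:ℝ)*s ≤ Real.sinh ((N:ℝ)*s) := Real.self_le_sinh_iff.2 hxpos.le
    constructor
    · have ht : 0 ≤ Real.sinh ((N:ℝ)*s) / (1 + Real.cosh ((N:ℝ)*s)) :=
        div_nonneg hsh.le hch.le
      have h1 : Real.sinh ((N:ℝ)*s) - (N:ℝ)*s ≤ ((N:ℝ)*s)^2 * Real.sinh ((N:ℝ)*s) := by
        have a1 := aux_sinh_le ((N:ℝ)*s) hxpos.le
        have a2 := aux_cosh_le ((N:ℝ)*s) hxpos.le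
        nlinarith
      have key : 1/s - (N:ℝ)/Real.sinh ((N:ℝ)*s)
          = (Real.sinh ((N:ℝ)*s) - (N:ℝ)*s) / (s * Real.sinh ((N:ℝ)*s)) := by
        field_simp
      have hbound : 1/s - (N:ℝ)/Real.sinh ((N:ℝ)*s) ≤ (N:ℝ)^2 := by
        rw [key]
        have hpos : 0 < s * Real.sinh ((N:ℝ)*s) := mul_pos hs0 hsh
        have hle : (Real.sinh ((N:ℝ)*s) - (N:ℝ)*s) / (s * Real.sinh ((N:ℝ)*s))
            ≤ (((N:ℝ)*s)^2 * Real.sinh ((N:ℝ)*s)) / (s * Real.sinh ((N:ℝ)*s)) :=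
          (div_le_div_iff_of_pos_right hpos).2 h1
        have heq : (((N:ℝ)*s)^2 * Real.sinh ((N:ℝ)*s)) / (s * Real.sinh ((N:ℝ)*s))
            = (N:ℝ)^2 * s := by field_simp
        rw [heq] at hle
        nlinarith
      linarith
    · have ht : Real.sinh ((N:ℝ)*s) / (1 + Real.cosh ((N:ℝ)*s)) ≤ 1 := by
        rw [div_le_one hch]
        have := Real.sinh_lt_cosh ((N:ℝ)*s)
        linarith
      have h2 : (N:ℝ)/Real.sinh ((N:ℝ)*s) ≤ 1/s := by
        rw [div_le_div_iff₀ hsh hs0]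
        linarith
      nlinarith [sq_nonneg (N:ℝ)]
end
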